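/- arXiv:2009.04873 — 5 statements merged into one kernel-verified Lean document; each statement's English description precedes it below -/
import Mathlib

section
/- Fix a 3-dimensional subspace W ⊆ V on which (·,·) is positive definite, let π_W : V → W be the orthogonal projection (well-defined since V = W ⊕ W^⊥), and let det_W be a nonzero alternating trilinear form on W. Then for every (α, β + ix) ∈ 𝒢 one has det_W(π_W(Re α), π_W(Im α), π_W(x)) ≠ 0. -/
/- Context: `V` is a finite-dimensional real vector space with a nondegenerate symmetric
bilinear form `B` of signature `(3, dim V − 3)`.  We model the complexification `V_ℂ`
by pairs `(a, b) : V × V` representing `a + i·b`. -/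

noncomputable section

/-- The ℂ-bilinear extension of `B` to `V × V`, where `(a, b)` represents `a + i·b`. -/
def Bc {V : Type*} [AddCommGroup V] [Module ℝ V] (B : LinearMap.BilinForm ℝ V)
    (y z : V × V) : ℂ :=
  ⟨B y.1 z.1 - B y.2 z.2, B y.1 z.2 + B y.2 z.1⟩

/-- The inclusion of `V` into its complexification `V × V`. -/
def toC {V : Type*} [AddCommGroup V] (z : V) : V × V := (z, 0)

/-- Complex conjugation on the complexification `V × V`. -/
def conjC {V : Type*} [AddCommGroup V] (y : V × V) : V × V := (y.1, -y.2)

/-- Scalar multiplication by a complex number on the complexification `V × V`. -/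
def cSMul {V : Type*} [AddCommGroup V] [Module ℝ V] (s : ℂ) (y : V × V) : V × V :=
  (s.re • y.1 - s.im • y.2, s.im • y.1 + s.re • y.2)

/-- The (symmetric, nondegenerate) form `B` has signature `(3, dim V − 3)`: `V` splits as an
orthogonal direct sum of a 3-dimensional positive definite subspace and a negative definite
complement. -/
def IsSigThree {V : Type*} [AddCommGroup V] [Module ℝ V] (B : LinearMap.BilinForm ℝ V) : Prop :=
  ∃ P N : Submodule ℝ V, IsCompl P N ∧ Module.finrank ℝ P = 3 ∧
    (∀ x ∈ P, ∀ y ∈ N, B x y = 0) ∧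
    (∀ x ∈ P, x ≠ 0 → 0 < B x x) ∧ (∀ y ∈ N, y ≠ 0 → B y y < 0)

/-- The period domain `𝒢`: pairs `(α, β + i·x)` with `α² = 0`, `α·ᾱ > 0`, `α·x = 0`, `x² > 0`.
A point is `p = (α, (β, x))` where `α : V × V` is a complexified vector and `β, x ∈ V`. -/
def periodDomain {V : Type*} [AddCommGroup V] [Module ℝ V] (B : LinearMap.BilinForm ℝ V) :
    Set ((V × V) × (V × V)) :=
  {p | Bc B p.1 p.1 = 0 ∧ 0 < (Bc B p.1 (conjC p.1)).re ∧
       Bc B p.1 (toC p.2.2) = 0 ∧ 0 < B p.2.2 p.2.2}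


/-! Writing `α = a + i b`, the conditions defining `𝒢` say that `a`, `b`, `x` are pairwise
orthogonal with positive squares, so every nontrivial combination of them has positive square.
If `π a`, `π b`, `π x` were linearly dependent, such a combination would lie in
`ker π = W^⊥`, and adding it to `W` would give a 4-dimensional positive definite subspace,
which signature `(3, dim V - 3)` forbids. So `π a`, `π b`, `π x` form a basis of `W`, and a
nonzero alternating form does not vanish on a basis. -/

namespace LinearMap.BilinForm

section

variable {R M : Type*} [CommRing R] [AddCommGroup M] [Module R M] {B : LinearMap.BilinForm R M}

theorem iIsOrtho.apply_sum_smul_self {ι : Type*} {v : ι → M} (hv : B.iIsOrtho v)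
    (s : Finset ι) (g : ι → R) :
    B (∑ i ∈ s, g i • v i) (∑ i ∈ s, g i • v i) = ∑ i ∈ s, g i * g i * B (v i) (v i) := by
  simp only [sum_left, sum_right, smul_left, smul_right]
  refine Finset.sum_congr rfl fun i hi => ?_
  rw [Finset.sum_eq_single_of_mem i hi fun j _ hji => by simp [hv hji]]
  ring

end

variable {V : Type*} [AddCommGroup V] [Module ℝ V] {B : LinearMap.BilinForm ℝ V}

theorem iIsOrtho.linearIndependent_comp {ι M : Type*} [AddCommGroup M] [Module ℝ M]
    {v : ι → V} (hv : B.iIsOrtho v) (hpos : ∀ i, 0 < B (v i) (v i))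
    (f : V →ₗ[ℝ] M) (hf : ∀ u, f u = 0 → B u u ≤ 0) : LinearIndependent ℝ (f ∘ v) := by
  rw [linearIndependent_iff']
  intro s g hg i hi
  by_contra hgi
  have hfu : f (∑ j ∈ s, g j • v j) = 0 := by
    simpa only [map_sum, map_smul, Function.comp_apply] using hg
  have hu : 0 < B (∑ j ∈ s, g j • v j) (∑ j ∈ s, g j • v j) := by
    rw [hv.apply_sum_smul_self]
    exact Finset.sum_pos' (fun j _ => mul_nonneg (mul_self_nonneg _) (hpos j).le)
      ⟨i, hi, mul_pos (mul_self_pos.2 hgi) (hpos i)⟩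
  exact (hf _ hfu).not_gt hu

theorem disjoint_orthogonal_of_pos {W : Submodule ℝ V} (hW : ∀ w ∈ W, w ≠ 0 → 0 < B w w) :
    Disjoint W (B.orthogonal W) :=
  Submodule.disjoint_def.2 fun w hw hwW => by
    by_contra hne
    exact (hW w hw hne).ne' (hwW w hw)

theorem pos_of_mem_sup_span_orthogonal (hB : B.IsRefl) {W : Submodule ℝ V}
    (hW : ∀ w ∈ W, w ≠ 0 → 0 < B w w) {v : V} (hv : v ∈ B.orthogonal W) (hvpos : 0 < B v v) :
    ∀ z ∈ W ⊔ ℝ ∙ v, z ≠ 0 → 0 < B z z := by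
  intro z hz hz0
  obtain ⟨w, hw, _, hcv, rfl⟩ := Submodule.mem_sup.1 hz
  obtain ⟨c, rfl⟩ := Submodule.mem_span_singleton.1 hcv
  have hwv : B w v = 0 := hv w hw
  have hvw : B v w = 0 := hB w v hwv
  have hexpand : B (w + c • v) (w + c • v) = B w w + c * c * B v v := by
    simp only [add_left, add_right, smul_left, smul_right, hwv, hvw]
    ring
  rw [hexpand]
  rcases eq_or_ne w 0 with rfl | hw0
  · have hc : c ≠ 0 := by rintro rfl; simp at hz0
    simpa using mul_pos (mul_self_pos.2 hc) hvpos
  · exact add_pos_of_pos_of_nonneg (hW w hw hw0) (mul_nonneg (mul_self_nonneg c) hvpos.le)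

end LinearMap.BilinForm

open LinearMap.BilinForm Module

theorem LinearMap.ker_le_of_isCompl {R M : Type*} [Ring R] [AddCommGroup M] [Module R M]
    {W U : Submodule R M} (π : M →ₗ[R] W) (h : IsCompl W U) (hπW : ∀ w : W, π w = w)
    (hπU : ∀ u ∈ U, π u = 0) : LinearMap.ker π ≤ U := by
  intro v hv
  have hvWU : v ∈ W ⊔ U := h.sup_eq_top ▸ Submodule.mem_top
  obtain ⟨w, hw, u, hu, rfl⟩ := Submodule.mem_sup.1 hvWU
  have hπv : π (w + u) = ⟨w, hw⟩ := by rw [map_add, hπU u hu, add_zero, hπW ⟨w, hw⟩]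
  have hw0 : (⟨w, hw⟩ : W) = 0 := hπv.symm.trans hv
  rw [show w = 0 from congrArg Subtype.val hw0, zero_add]
  exact hu

theorem AlternatingMap.map_ne_zero_of_linearIndependent {K M ι : Type*} [Field K]
    [AddCommGroup M] [Module K M] [FiniteDimensional K M] [Fintype ι]
    {f : M [⋀^ι]→ₗ[K] K} (hf : f ≠ 0) {v : ι → M} (hv : LinearIndependent K v)
    (hcard : Fintype.card ι = finrank K M) : f v ≠ 0 := by
  simpa using (f.map_basis_ne_zero_iff (basisOfLinearIndependentOfCardEqFinrank' v hv hcard)).2 hf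

section Signature

variable {V : Type*} [AddCommGroup V] [Module ℝ V] [FiniteDimensional ℝ V]
  {B : LinearMap.BilinForm ℝ V}

theorem IsSigThree.finrank_le_three (hsig : IsSigThree B) {S : Submodule ℝ V}
    (hS : ∀ z ∈ S, z ≠ 0 → 0 < B z z) : finrank ℝ S ≤ 3 := by
  obtain ⟨P, N, hPN, hP3, -, -, hN⟩ := hsig
  have hSN : Disjoint S N := Submodule.disjoint_def.2 fun z hzS hzN => by
    by_contra hz
    exact (hS z hzS hz).not_gt (hN z hzN hz)
  have h₁ := Submodule.finrank_add_finrank_le_of_disjoint hSN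
  have h₂ := Submodule.finrank_add_eq_of_isCompl hPN
  omega

theorem IsSigThree.apply_self_nonpos_of_mem_orthogonal (hsig : IsSigThree B) (hB : B.IsRefl)
    {W : Submodule ℝ V} (hW3 : finrank ℝ W = 3) (hW : ∀ w ∈ W, w ≠ 0 → 0 < B w w)
    {v : V} (hv : v ∈ B.orthogonal W) : B v v ≤ 0 := by
  by_contra! hvpos
  have hvW : v ∉ W := fun hvW => by
    have hv0 : v = 0 := Submodule.disjoint_def.1 (disjoint_orthogonal_of_pos hW) v hvW hv
    simp [hv0] at hvpos
  have h := hsig.finrank_le_three (pos_of_mem_sup_span_orthogonal hB hW hv hvpos)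
  rw [Submodule.finrank_sup_span_singleton hvW, hW3] at h
  omega

end Signature

section PeriodDomain

variable {V : Type*} [AddCommGroup V] [Module ℝ V] {B : LinearMap.BilinForm ℝ V}

theorem Bc_self_eq_zero_iff (hB : B.IsSymm) {y : V × V} :
    Bc B y y = 0 ↔ B y.1 y.1 = B y.2 y.2 ∧ B y.1 y.2 = 0 := by
  rw [Complex.ext_iff]
  simp only [Bc, Complex.zero_re, Complex.zero_im, sub_eq_zero, hB.eq y.2 y.1]
  constructor <;> rintro ⟨h₁, h₂⟩ <;> exact ⟨h₁, by linarith⟩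

theorem Bc_conjC_self_re (y : V × V) :
    (Bc B y (conjC y)).re = B y.1 y.1 + B y.2 y.2 := by
  simp [Bc, conjC]

theorem Bc_toC_eq_zero_iff {y : V × V} {z : V} :
    Bc B y (toC z) = 0 ↔ B y.1 z = 0 ∧ B y.2 z = 0 := by
  simp [Bc, toC, Complex.ext_iff]

theorem iIsOrtho_and_pos_of_mem_periodDomain (hB : B.IsSymm) {p : (V × V) × (V × V)}
    (hp : p ∈ periodDomain B) :
    B.iIsOrtho ![p.1.1, p.1.2, p.2.2] ∧
      ∀ i, 0 < B (![p.1.1, p.1.2, p.2.2] i) (![p.1.1, p.1.2, p.2.2] i) := by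
  obtain ⟨hα, hαα, hαx, hx⟩ := hp
  obtain ⟨hnorm, hab⟩ := (Bc_self_eq_zero_iff hB).1 hα
  obtain ⟨hax, hbx⟩ := Bc_toC_eq_zero_iff.1 hαx
  rw [Bc_conjC_self_re] at hαα
  refine ⟨fun i j hij => ?_, fun i => ?_⟩
  · fin_cases i <;> fin_cases j <;> simp_all [Function.onFun, hB.eq p.2.2, hB.eq p.1.2 p.1.1]
  · fin_cases i <;> simp <;> linarith

end PeriodDomain

theorem statement2_general {V : Type*} [NormedAddCommGroup V] [NormedSpace ℝ V] [FiniteDimensional ℝ V]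
    (B : LinearMap.BilinForm ℝ V)
    (hsymm : ∀ x y : V, B x y = B y x)
    (hsig : IsSigThree B)
    (W : Submodule ℝ V) (hW3 : Module.finrank ℝ W = 3)
    (hWpos : ∀ w ∈ W, w ≠ 0 → 0 < B w w)
    (π : V →ₗ[ℝ] W) (hπ1 : ∀ w : W, π (w : V) = w) (hπ2 : ∀ u ∈ B.orthogonal W, π u = 0)
    (detW : W [⋀^Fin 3]→ₗ[ℝ] ℝ) (hdetW : detW ≠ 0)
    (p : (V × V) × (V × V)) (hp : p ∈ periodDomain B) :
    detW ![π p.1.1, π p.1.2, π p.2.2] ≠ 0 := by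
  have hB : B.IsSymm := ⟨hsymm⟩
  obtain ⟨hortho, hpos⟩ := iIsOrtho_and_pos_of_mem_periodDomain hB hp
  have hcompl : IsCompl W (B.orthogonal W) :=
    (isCompl_orthogonal_iff_disjoint hB.isRefl).2 (disjoint_orthogonal_of_pos hWpos)
  have hli := hortho.linearIndependent_comp hpos π fun u hu =>
    hsig.apply_self_nonpos_of_mem_orthogonal hB.isRefl hW3 hWpos
      (π.ker_le_of_isCompl hcompl hπ1 hπ2 hu)
  have := detW.map_ne_zero_of_linearIndependent hdetW hli (by simp [hW3])
  rwa [← FinVec.map_eq] at this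

/-- Fix a 3-dimensional subspace `W ⊆ V` on which the form is positive
definite, the orthogonal projection `π : V → W` (identity on `W`, zero on `W^⊥`), and a
nonzero alternating trilinear form `det_W` on `W`.  Then for every `(α, β + ix) ∈ 𝒢` one has
`det_W(π(Re α), π(Im α), π(x)) ≠ 0`. -/
theorem statement2 {V : Type*} [NormedAddCommGroup V] [NormedSpace ℝ V] [FiniteDimensional ℝ V]
    (B : LinearMap.BilinForm ℝ V)
    (hsymm : ∀ x y : V, B x y = B y x)
    (hnd : ∀ x : V, (∀ y : V, B x y = 0) → x = 0)
    (hsig : IsSigThree B)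
    (W : Submodule ℝ V) (hW3 : Module.finrank ℝ W = 3)
    (hWpos : ∀ w ∈ W, w ≠ 0 → 0 < B w w)
    (π : V →ₗ[ℝ] W) (hπ1 : ∀ w : W, π (w : V) = w) (hπ2 : ∀ u ∈ B.orthogonal W, π u = 0)
    (detW : W [⋀^Fin 3]→ₗ[ℝ] ℝ) (hdetW : detW ≠ 0)
    (p : (V × V) × (V × V)) (hp : p ∈ periodDomain B) :
    detW ![π p.1.1, π p.1.2, π p.2.2] ≠ 0 :=
  statement2_general B hsymm hsig W hW3 hWpos π hπ1 hπ2 detW hdetW p hp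
end
end

section
/- The period domain 𝒢 is nonempty and has at least two connected components. More precisely, for every (α, β + ix) ∈ 𝒢 the point (α, −β − ix) also lies in 𝒢, and (α, β + ix) and (α, −β − ix) lie in distinct connected components of 𝒢. -/
/- Context: `V` is a finite-dimensional real vector space with a nondegenerate symmetric
bilinear form `B` of signature `(3, dim V − 3)`.  We model the complexification `V_ℂ`
by pairs `(a, b) : V × V` representing `a + i·b`. -/

noncomputable section

/-
On `𝒢` the real vectors `Re α`, `Im α`, `x` are pairwise orthogonal with positive squares, so
every nonzero vector of their span has positive square and the span meets the negative definite
summand `N` of `V = P ⊕ N` trivially. Projecting them to `P` along `N` thus gives a basis of the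
3-dimensional space `P`, and its orientation is a continuous function on `𝒢` that never vanishes.
Replacing `x` by `-x` reverses this orientation, so by the intermediate value theorem the two
points lie in different connected components.
-/

open LinearMap (BilinForm)

theorem Module.Basis.continuous_det {ι R M : Type*} [Fintype ι] [DecidableEq ι]
    [NontriviallyNormedField R] [CompleteSpace R] [AddCommGroup M] [TopologicalSpace M]
    [IsTopologicalAddGroup M] [T2Space M] [Module R M] [ContinuousSMul R M]
    (b : Module.Basis ι R M) : Continuous b.det := by
  have : (b.det : (ι → M) → R) = fun v => (b.toMatrix v).det := funext b.det_apply
  rw [this]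
  exact b.continuous_toMatrix.matrix_det

theorem connectedComponentIn_ne_of_mul_nonpos {X : Type*} [TopologicalSpace X] {S : Set X}
    {F : X → ℝ} (hF : ContinuousOn F S) (hS : ∀ z ∈ S, F z ≠ 0) {p q : X} (hq : q ∈ S)
    (hpq : F p * F q ≤ 0) : connectedComponentIn S p ≠ connectedComponentIn S q := by
  intro h
  have hp : p ∈ S := by
    by_contra hp
    rw [connectedComponentIn_eq_empty hp] at h
    exact (h ▸ Set.notMem_empty q) (mem_connectedComponentIn hq)
  have hFC : (F '' connectedComponentIn S p).OrdConnected :=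
    (isPreconnected_connectedComponentIn.image F
      (hF.mono (connectedComponentIn_subset S p))).ordConnected
  have hzero : (0 : ℝ) ∈ Set.uIcc (F p) (F q) := by
    rw [Set.mem_uIcc]
    rcases mul_nonpos_iff.1 hpq with h | h
    · exact Or.inr ⟨h.2, h.1⟩
    · exact Or.inl h
  obtain ⟨z, hz, hFz⟩ := hFC.uIcc_subset (Set.mem_image_of_mem F (mem_connectedComponentIn hp))
    (Set.mem_image_of_mem F (h ▸ mem_connectedComponentIn hq)) hzero
  exact hS z (connectedComponentIn_subset S p hz) hFz

section PeriodDomain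

variable {V : Type*} [AddCommGroup V] [Module ℝ V] {B : BilinForm ℝ V}

theorem linearIndependent_comp_of_iIsOrtho {ι W : Type*} [Fintype ι] [AddCommGroup W]
    [Module ℝ W] {f : ι → V} (hf : B.iIsOrtho f) (hpos : ∀ i, 0 < B (f i) (f i))
    {π : V →ₗ[ℝ] W}
    (hker : ∀ y, π y = 0 → B y y ≤ 0) : LinearIndependent ℝ (π ∘ f) := by
  rw [Fintype.linearIndependent_iff]
  intro g hg
  set w := ∑ i, g i • f i
  have hπw : π w = 0 := by simpa [w, map_sum] using hg
  have hww : B w w = ∑ i, g i ^ 2 * B (f i) (f i) := by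
    simp only [w, LinearMap.BilinForm.sum_left, LinearMap.BilinForm.sum_right,
      LinearMap.BilinForm.smul_left, LinearMap.BilinForm.smul_right]
    refine Finset.sum_congr rfl fun i _ => ?_
    rw [Finset.sum_eq_single i
      (fun j _ hji => by rw [(hf hji : B (f j) (f i) = 0), mul_zero]) (by simp)]
    ring
  have hnonneg : ∀ i ∈ Finset.univ, 0 ≤ g i ^ 2 * B (f i) (f i) :=
    fun i _ => mul_nonneg (sq_nonneg _) (hpos i).le
  have hterms : ∀ i ∈ Finset.univ, g i ^ 2 * B (f i) (f i) = 0 :=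
    (Finset.sum_eq_zero_iff_of_nonneg hnonneg).1
      (le_antisymm (hww ▸ hker w hπw) (Finset.sum_nonneg hnonneg))
  intro i
  simpa [(hpos i).ne'] using hterms i (Finset.mem_univ i)

theorem mem_periodDomain_iff (hsymm : ∀ x y : V, B x y = B y x) {p : (V × V) × (V × V)} :
    p ∈ periodDomain B ↔
      B p.1.1 p.1.1 = B p.1.2 p.1.2 ∧ 0 < B p.1.1 p.1.1 ∧ B p.1.1 p.1.2 = 0 ∧
        B p.1.1 p.2.2 = 0 ∧ B p.1.2 p.2.2 = 0 ∧ 0 < B p.2.2 p.2.2 := by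
  simp only [periodDomain, Bc, conjC, toC, Set.mem_ofPred_eq, Complex.ext_iff, Complex.zero_re,
    Complex.zero_im, map_neg, map_zero, sub_zero, zero_add, sub_neg_eq_add]
  rw [hsymm p.1.2 p.1.1]
  constructor
  · rintro ⟨⟨haa, hab⟩, hpos, ⟨hax, hbx⟩, hxx⟩
    exact ⟨by linarith, by linarith, by linarith, hax, hbx, hxx⟩
  · rintro ⟨haa, hpos, hab, hax, hbx, hxx⟩
    exact ⟨⟨by linarith, by linarith⟩, by linarith, ⟨hax, hbx⟩, hxx⟩

theorem neg_mem_periodDomain {p : (V × V) × (V × V)} (hp : p ∈ periodDomain B) :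
    (p.1, (-p.2.1, -p.2.2)) ∈ periodDomain B := by
  obtain ⟨hαα, hαᾱ, hαx, hxx⟩ := hp
  refine ⟨hαα, hαᾱ, ?_, by simpa using hxx⟩
  simpa [Bc, toC, Complex.ext_iff] using hαx

theorem iIsOrtho_of_mem_periodDomain (hsymm : ∀ x y : V, B x y = B y x)
    {p : (V × V) × (V × V)} (hp : p ∈ periodDomain B) :
    B.iIsOrtho ![p.1.1, p.1.2, p.2.2] ∧
      ∀ i, 0 < B (![p.1.1, p.1.2, p.2.2] i) (![p.1.1, p.1.2, p.2.2] i) := by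
  obtain ⟨haa, hpos, hab, hax, hbx, hxx⟩ := (mem_periodDomain_iff hsymm).1 hp
  refine ⟨fun i j hij => ?_, fun i => ?_⟩
  · fin_cases i <;> fin_cases j <;>
      simp_all [Function.onFun, hsymm p.1.2 p.1.1, hsymm p.2.2 p.1.1, hsymm p.2.2 p.1.2]
  · fin_cases i <;> simp <;> linarith

theorem periodDomain_nonempty_of_iIsOrtho (hsymm : ∀ x y : V, B x y = B y x) {e : Fin 3 → V}
    (he : B.iIsOrtho e) (hpos : ∀ i, 0 < B (e i) (e i)) : (periodDomain B).Nonempty := by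
  set c₀ := √(B (e 1) (e 1))
  set c₁ := √(B (e 0) (e 0))
  have hc₀ : c₀ * c₀ = B (e 1) (e 1) := Real.mul_self_sqrt (hpos 1).le
  have hc₁ : c₁ * c₁ = B (e 0) (e 0) := Real.mul_self_sqrt (hpos 0).le
  refine ⟨((c₀ • e 0, c₁ • e 1), (0, e 2)), (mem_periodDomain_iff hsymm).2 ?_⟩
  simp only [map_smul, LinearMap.smul_apply, smul_eq_mul]
  refine ⟨?_, ?_, ?_, ?_, ?_, hpos 2⟩
  · rw [← mul_assoc, ← mul_assoc, hc₀, hc₁, mul_comm]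
  · exact mul_pos (Real.sqrt_pos.2 (hpos 1)) (mul_pos (Real.sqrt_pos.2 (hpos 1)) (hpos 0))
  · rw [(he (by decide : (0 : Fin 3) ≠ 1) : B (e 0) (e 1) = 0), mul_zero, mul_zero]
  · rw [(he (by decide : (0 : Fin 3) ≠ 2) : B (e 0) (e 2) = 0), mul_zero]
  · rw [(he (by decide : (1 : Fin 3) ≠ 2) : B (e 1) (e 2) = 0), mul_zero]

theorem IsSigThree.exists_iIsOrtho (hsymm : ∀ x y : V, B x y = B y x) (hsig : IsSigThree B) :
    ∃ e : Fin 3 → V, B.iIsOrtho e ∧ ∀ i, 0 < B (e i) (e i) := by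
  obtain ⟨P, -, -, hrank, -, hpos, -⟩ := hsig
  have : FiniteDimensional ℝ P := Module.finite_of_finrank_eq_succ hrank
  obtain ⟨v, hv⟩ := LinearMap.BilinForm.exists_orthogonal_basis (B := B.restrict P)
    (LinearMap.BilinForm.isSymm_iff.1 (LinearMap.BilinForm.isSymm_def.2 fun x y => hsymm x y))
  refine ⟨fun i => v (finCongr hrank.symm i), fun i j hij => hv ?_, fun i => hpos _ (v _).2 ?_⟩
  · simpa using hij
  · simpa using v.ne_zero _

end PeriodDomain

section Orientation

variable {V W : Type*} [NormedAddCommGroup V] [NormedSpace ℝ V] [NormedAddCommGroup W]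
  [NormedSpace ℝ W] (b : Module.Basis (Fin 3) ℝ W) (π : V →L[ℝ] W)

def periodOrientation (p : (V × V) × (V × V)) : ℝ :=
  b.det ![π p.1.1, π p.1.2, π p.2.2]

theorem continuous_periodOrientation : Continuous (periodOrientation b π) :=
  b.continuous_det.comp <| by fun_prop

theorem periodOrientation_neg (p : (V × V) × (V × V)) :
    periodOrientation b π (p.1, (-p.2.1, -p.2.2)) = -periodOrientation b π p := by
  have hupdate : ![π p.1.1, π p.1.2, π (-p.2.2)] =
      Function.update ![π p.1.1, π p.1.2, π p.2.2] 2 (-![π p.1.1, π p.1.2, π p.2.2] 2) := by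
    ext i; fin_cases i <;> simp
  rw [periodOrientation, periodOrientation, hupdate, AlternatingMap.map_update_neg,
    Function.update_eq_self]

theorem periodOrientation_ne_zero {B : BilinForm ℝ V} (hsymm : ∀ x y : V, B x y = B y x)
    (hker : ∀ y, π y = 0 → B y y ≤ 0) {p : (V × V) × (V × V)}
    (hp : p ∈ periodDomain B) : periodOrientation b π p ≠ 0 := by
  obtain ⟨hortho, hpos⟩ := iIsOrtho_of_mem_periodDomain hsymm hp
  have hli : LinearIndependent ℝ ![π p.1.1, π p.1.2, π p.2.2] := by
    convert linearIndependent_comp_of_iIsOrtho hortho hpos (π := π.toLinearMap) hker using 1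
    ext i; fin_cases i <;> rfl
  have := Module.Finite.of_basis b
  have hspan := hli.span_eq_top_of_card_eq_finrank' (by simp [Module.finrank_eq_card_basis b])
  exact ((b.is_basis_iff_det).1 ⟨hli, hspan⟩).ne_zero

end Orientation

theorem statement3_general {V : Type*} [NormedAddCommGroup V] [NormedSpace ℝ V] [FiniteDimensional ℝ V]
    (B : LinearMap.BilinForm ℝ V)
    (hsymm : ∀ x y : V, B x y = B y x)
    (hsig : IsSigThree B) :
    (periodDomain B).Nonempty ∧
    ∀ p ∈ periodDomain B,
      (p.1, (-p.2.1, -p.2.2)) ∈ periodDomain B ∧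
      connectedComponentIn (periodDomain B) p ≠
        connectedComponentIn (periodDomain B) (p.1, (-p.2.1, -p.2.2)) := by
  obtain ⟨e, he, hepos⟩ := hsig.exists_iIsOrtho hsymm
  obtain ⟨P, N, hPN, hrank, -, -, hneg⟩ := hsig
  let π := LinearMap.toContinuousLinearMap (P.projectionOnto N hPN)
  let b := Module.finBasisOfFinrankEq ℝ P hrank
  have hker : ∀ y, π y = 0 → B y y ≤ 0 := fun y hy => by
    obtain rfl | hy0 := eq_or_ne y 0
    · simp
    · exact (hneg y ((Submodule.projectionOnto_apply_eq_zero_iff hPN).1 hy) hy0).le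
  refine ⟨periodDomain_nonempty_of_iIsOrtho hsymm he hepos, fun p hp =>
    ⟨neg_mem_periodDomain hp, connectedComponentIn_ne_of_mul_nonpos
      (continuous_periodOrientation b π).continuousOn
      (fun z hz => periodOrientation_ne_zero b π hsymm hker hz) (neg_mem_periodDomain hp) ?_⟩⟩
  rw [periodOrientation_neg, mul_neg, neg_nonpos]
  exact mul_self_nonneg _

/-- The period domain `𝒢` is nonempty and has at least two connected
components: for every `(α, β + ix) ∈ 𝒢`, the point `(α, −β − ix)` also lies in `𝒢`, and the
two points lie in distinct connected components of `𝒢`. -/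
theorem statement3 {V : Type*} [NormedAddCommGroup V] [NormedSpace ℝ V] [FiniteDimensional ℝ V]
    (B : LinearMap.BilinForm ℝ V)
    (hsymm : ∀ x y : V, B x y = B y x)
    (hnd : ∀ x : V, (∀ y : V, B x y = 0) → x = 0)
    (hsig : IsSigThree B) :
    (periodDomain B).Nonempty ∧
    ∀ p ∈ periodDomain B,
      (p.1, (-p.2.1, -p.2.2)) ∈ periodDomain B ∧
      connectedComponentIn (periodDomain B) p ≠
        connectedComponentIn (periodDomain B) (p.1, (-p.2.1, -p.2.2)) :=
  statement3_general B hsymm hsig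
end
end

section
/- The mirror map m maps Dom(m)^𝒢 into itself: for every (α, β + ix) ∈ Dom(m)^𝒢, writing m(α, β + ix) = (α∨, β∨ + i x∨), one has (α∨)² = 0, α∨·(conjugate of α∨) > 0, α∨·x∨ = 0, (x∨)² > 0, (Im α∨)·v = 0, (Re α∨)·v = n/((Re α)·v) ≠ 0, x∨·v = 0, and β∨·v = 0; hence m(α, β + ix) ∈ Dom(m)^𝒢. -/
/- Context: `V` is a finite-dimensional real vector space with a nondegenerate symmetric
bilinear form `B` of signature `(3, dim V − 3)`.  We model the complexification `V_ℂ`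
by pairs `(a, b) : V × V` representing `a + i·b`. -/

noncomputable section

/- Mirror-map context: fix `n > 0` and `v, v* ∈ V` spanning a hyperbolic plane `U(n)`:
`v² = (v*)² = 0`, `v·v* = n`. -/

/-- The projection `pr(y) = y − ((y·v*)/n)·v − ((y·v)/n)·v*` on the complexification. -/
def prC {V : Type*} [AddCommGroup V] [Module ℝ V] (B : LinearMap.BilinForm ℝ V)
    (v vs : V) (n : ℝ) (y : V × V) : V × V :=
  y - cSMul (Bc B y (toC vs) / (n : ℂ)) (toC v) - cSMul (Bc B y (toC v) / (n : ℂ)) (toC vs)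

/-- The projection `pr` on real vectors: `pr(z) = z − ((z·v*)/n)·v − ((z·v)/n)·v*`. -/
def prR {V : Type*} [AddCommGroup V] [Module ℝ V] (B : LinearMap.BilinForm ℝ V)
    (v vs : V) (n : ℝ) (z : V) : V :=
  z - (B z vs / n) • v - (B z v / n) • vs

/-- The domain `Dom(m)^𝒢` of the mirror map: points `(α, β + ix) ∈ 𝒢` with
`Im α · v = 0`, `Re α · v ≠ 0`, `x·v = 0`, `β·v = 0`. -/
def domM {V : Type*} [AddCommGroup V] [Module ℝ V] (B : LinearMap.BilinForm ℝ V)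
    (v : V) : Set ((V × V) × (V × V)) :=
  {p | p ∈ periodDomain B ∧ B p.1.2 v = 0 ∧ B p.1.1 v ≠ 0 ∧ B p.2.2 v = 0 ∧ B p.2.1 v = 0}

/-- The mirror map
`m(α, β+ix) = ( [√n·pr(β+ix) − ½((β+ix)²)·v + v*] / (Re α · v), [√n·pr(α) − (α·β)·v] / (Re α · v) )`. -/
def mir {V : Type*} [AddCommGroup V] [Module ℝ V] (B : LinearMap.BilinForm ℝ V)
    (v vs : V) (n : ℝ) (p : (V × V) × (V × V)) : (V × V) × (V × V) :=
  ((B p.1.1 v)⁻¹ •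
      (Real.sqrt n • prC B v vs n p.2 - cSMul (Bc B p.2 p.2 / 2) (toC v) + toC vs),
   (B p.1.1 v)⁻¹ •
      (Real.sqrt n • prC B v vs n p.1 - cSMul (Bc B p.1 (toC p.2.1)) (toC v)))

/-
Let `U = span(v, v*)`. The map `pr` lands in `U^⊥` and preserves products of vectors
orthogonal to `v`, so every component of `m(α, β + ix)` is `(Re α · v)⁻¹` times a vector
`√n · pr(y) + c v + e v*`, whose products are computed from those of the `y`'s and of the
hyperbolic plane `U`. The conditions defining `𝒢` are homogeneous, so the factor
`(Re α · v)⁻¹` can be dropped, and then `(Re α∨)² = (Im α∨)² = n x²`, `Re α∨ · Im α∨ = 0`,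
`α∨ · x∨ = 0` and `(x∨)² = n (Im α)² > 0`, the last because `α² = 0` and `α · ᾱ > 0`
force `(Im α)² > 0`.
-/

structure IsHyperbolicPair {V : Type*} [AddCommGroup V] [Module ℝ V]
    (B : LinearMap.BilinForm ℝ V) (v vs : V) (n : ℝ) : Prop where
  ne_zero : n ≠ 0
  isotropic_fst : B v v = 0
  isotropic_snd : B vs vs = 0
  apply_fst_snd : B v vs = n

section MirrorMap

variable {V : Type*} [AddCommGroup V] [Module ℝ V] {B : LinearMap.BilinForm ℝ V}
  {v vs : V} {n : ℝ}

lemma prC_mk (y z : V) : prC B v vs n (y, z) = (prR B v vs n y, prR B v vs n z) := by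
  simp only [prC, prR, cSMul, toC, Bc, Complex.div_ofReal_re, Complex.div_ofReal_im,
    Prod.mk_sub_mk, smul_zero, sub_zero, add_zero, zero_add, map_zero]

lemma mir_mk (a b β x : V) :
    mir B v vs n ((a, b), (β, x)) = (B a v)⁻¹ •
      ((√n • prR B v vs n β - ((B β β - B x x) / 2) • v + vs,
        √n • prR B v vs n x - ((B β x + B x β) / 2) • v),
       (√n • prR B v vs n a - B a β • v,
        √n • prR B v vs n b - B b β • v)) := by
  simp [mir, prC_mk, cSMul, toC, Bc]

lemma mem_periodDomain_iff_s4 (a b β x : V) :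
    ((a, b), (β, x)) ∈ periodDomain B ↔
      (B a a - B b b = 0 ∧ B a b + B b a = 0) ∧ 0 < B a a + B b b ∧
        (B a x = 0 ∧ B b x = 0) ∧ 0 < B x x := by
  simp [periodDomain, Bc, conjC, toC, Complex.ext_iff]

lemma smul_mem_periodDomain {c : ℝ} (hc : c ≠ 0) {p : (V × V) × (V × V)}
    (hp : p ∈ periodDomain B) : c • p ∈ periodDomain B := by
  obtain ⟨⟨a, b⟩, β, x⟩ := p
  rw [Prod.smul_mk, Prod.smul_mk, Prod.smul_mk, mem_periodDomain_iff_s4]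
  rw [mem_periodDomain_iff_s4] at hp
  obtain ⟨⟨hre, him⟩, hαᾱ, ⟨hax, hbx⟩, hx⟩ := hp
  simp only [map_smul, LinearMap.smul_apply, smul_eq_mul]
  have hc2 : 0 < c * c := mul_self_pos.2 hc
  refine ⟨⟨?_, ?_⟩, ?_, ⟨?_, ?_⟩, ?_⟩
  · linear_combination c * c * hre
  · linear_combination c * c * him
  · nlinarith [mul_pos hc2 hαᾱ]
  · simp [hax]
  · simp [hbx]
  · nlinarith [mul_pos hc2 hx]

namespace IsHyperbolicPair

lemma prR_apply_fst (hU : IsHyperbolicPair B v vs n) (hB : B.IsSymm) (z : V) :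
    B (prR B v vs n z) v = 0 := by
  simp only [prR, map_sub, map_smul, LinearMap.sub_apply, LinearMap.smul_apply, smul_eq_mul,
    hU.isotropic_fst, hB.eq vs v, hU.apply_fst_snd]
  field_simp [hU.ne_zero]
  ring

lemma prR_apply_snd (hU : IsHyperbolicPair B v vs n) (z : V) :
    B (prR B v vs n z) vs = 0 := by
  simp only [prR, map_sub, map_smul, LinearMap.sub_apply, LinearMap.smul_apply, smul_eq_mul,
    hU.isotropic_snd, hU.apply_fst_snd]
  field_simp [hU.ne_zero]
  ring

lemma apply_prR_fst (hU : IsHyperbolicPair B v vs n) (hB : B.IsSymm) (z : V) :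
    B v (prR B v vs n z) = 0 := by
  rw [hB.eq, hU.prR_apply_fst hB]

lemma apply_prR_snd (hU : IsHyperbolicPair B v vs n) (hB : B.IsSymm) (z : V) :
    B vs (prR B v vs n z) = 0 := by
  rw [hB.eq, hU.prR_apply_snd]

lemma prR_apply_prR (hU : IsHyperbolicPair B v vs n) (hB : B.IsSymm) {y z : V}
    (hy : B y v = 0) (hz : B z v = 0) : B (prR B v vs n y) (prR B v vs n z) = B y z := by
  simp only [prR, map_sub, map_smul, LinearMap.sub_apply, LinearMap.smul_apply, smul_eq_mul,
    hB.eq v z, hB.eq vs v, hz, hy, hU.isotropic_fst, hU.isotropic_snd, hU.apply_fst_snd]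
  field_simp [hU.ne_zero]
  ring

lemma mir_mem_periodDomain (hU : IsHyperbolicPair B v vs n) (hB : B.IsSymm) (hn : 0 < n)
    {p : (V × V) × (V × V)} (hp : p ∈ domM B v) : mir B v vs n p ∈ periodDomain B := by
  obtain ⟨⟨a, b⟩, β, x⟩ := p
  obtain ⟨hα, hbv, hav, hxv, hβv⟩ := hp
  dsimp only at hbv hav hxv hβv
  rw [mem_periodDomain_iff_s4] at hα
  obtain ⟨⟨hαα, -⟩, hαᾱ, ⟨-, hbx⟩, hx⟩ := hα
  have hs : √n * √n = n := Real.mul_self_sqrt hn.le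
  rw [mir_mk]
  refine smul_mem_periodDomain (inv_ne_zero hav) ?_
  rw [mem_periodDomain_iff_s4]
  simp only [map_add, map_sub, map_smul, LinearMap.add_apply, LinearMap.sub_apply,
    LinearMap.smul_apply, smul_eq_mul, hU.prR_apply_fst hB, hU.prR_apply_snd,
    hU.apply_prR_fst hB, hU.apply_prR_snd hB, hU.prR_apply_prR hB, hβv, hxv, hbv,
    hU.isotropic_fst, hU.isotropic_snd, hU.apply_fst_snd, hB.eq vs v, hB.eq x b, hB.eq β b, hbx,
    mul_zero, add_zero, sub_zero, zero_sub, zero_add, ← mul_assoc, hs]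
  exact ⟨⟨by ring, by ring⟩, by nlinarith, ⟨by ring, trivial⟩, mul_pos hn (by linarith)⟩

lemma mir_fst_fst_apply (hU : IsHyperbolicPair B v vs n) (hB : B.IsSymm)
    (p : (V × V) × (V × V)) : B (mir B v vs n p).1.1 v = n / B p.1.1 v := by
  obtain ⟨⟨a, b⟩, β, x⟩ := p
  simp only [mir_mk, Prod.smul_fst, map_smul, map_add, map_sub, LinearMap.smul_apply,
    LinearMap.add_apply, LinearMap.sub_apply, smul_eq_mul, hU.prR_apply_fst hB,
    hU.isotropic_fst, hB.eq vs v, hU.apply_fst_snd]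
  ring

lemma mir_apply_fst_eq_zero (hU : IsHyperbolicPair B v vs n) (hB : B.IsSymm)
    (p : (V × V) × (V × V)) :
    B (mir B v vs n p).1.2 v = 0 ∧ B (mir B v vs n p).2.1 v = 0 ∧
      B (mir B v vs n p).2.2 v = 0 := by
  obtain ⟨⟨a, b⟩, β, x⟩ := p
  simp [mir_mk, hU.prR_apply_fst hB, hU.isotropic_fst]

lemma mir_mem_domM (hU : IsHyperbolicPair B v vs n) (hB : B.IsSymm) (hn : 0 < n)
    {p : (V × V) × (V × V)} (hp : p ∈ domM B v) : mir B v vs n p ∈ domM B v := by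
  obtain ⟨h1, h2, h3⟩ := hU.mir_apply_fst_eq_zero hB p
  refine ⟨hU.mir_mem_periodDomain hB hn hp, h1, ?_, h3, h2⟩
  rw [hU.mir_fst_fst_apply hB]
  exact div_ne_zero hn.ne' hp.2.2.1

end IsHyperbolicPair
end MirrorMap

theorem statement4_general {V : Type*} [NormedAddCommGroup V] [NormedSpace ℝ V]
    (B : LinearMap.BilinForm ℝ V)
    (hsymm : ∀ x y : V, B x y = B y x)
    (n : ℕ) (hn : 0 < n) (v vs : V)
    (hv : B v v = 0) (hvs : B vs vs = 0) (hvvs : B v vs = (n : ℝ))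
    (p : (V × V) × (V × V)) (hp : p ∈ domM B v) :
    Bc B (mir B v vs n p).1 (mir B v vs n p).1 = 0 ∧
    0 < (Bc B (mir B v vs n p).1 (conjC (mir B v vs n p).1)).re ∧
    Bc B (mir B v vs n p).1 (toC (mir B v vs n p).2.2) = 0 ∧
    0 < B (mir B v vs n p).2.2 (mir B v vs n p).2.2 ∧
    B (mir B v vs n p).1.2 v = 0 ∧
    B (mir B v vs n p).1.1 v = (n : ℝ) / B p.1.1 v ∧
    B (mir B v vs n p).1.1 v ≠ 0 ∧
    B (mir B v vs n p).2.2 v = 0 ∧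
    B (mir B v vs n p).2.1 v = 0 ∧
    mir B v vs n p ∈ domM B v := by
  have hn' : (0 : ℝ) < n := Nat.cast_pos.2 hn
  have hU : IsHyperbolicPair B v vs n := ⟨hn'.ne', hv, hvs, hvvs⟩
  have hB : B.IsSymm := ⟨hsymm⟩
  have hm := hU.mir_mem_domM hB hn' hp
  exact ⟨hm.1.1, hm.1.2.1, hm.1.2.2.1, hm.1.2.2.2, hm.2.1, hU.mir_fst_fst_apply hB p,
    hm.2.2.1, hm.2.2.2.1, hm.2.2.2.2, hm⟩

/-- The mirror map maps `Dom(m)^𝒢` into itself; writing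
`m(α, β + ix) = (α∨, β∨ + i x∨)`, one has `(α∨)² = 0`, `α∨·ᾱ∨ > 0`, `α∨·x∨ = 0`,
`(x∨)² > 0`, `Im α∨ · v = 0`, `Re α∨ · v = n/(Re α · v) ≠ 0`, `x∨·v = 0`, `β∨·v = 0`. -/
theorem statement4 {V : Type*} [NormedAddCommGroup V] [NormedSpace ℝ V] [FiniteDimensional ℝ V]
    (B : LinearMap.BilinForm ℝ V)
    (hsymm : ∀ x y : V, B x y = B y x)
    (hnd : ∀ x : V, (∀ y : V, B x y = 0) → x = 0)
    (hsig : IsSigThree B)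
    (n : ℕ) (hn : 0 < n) (v vs : V)
    (hv : B v v = 0) (hvs : B vs vs = 0) (hvvs : B v vs = (n : ℝ))
    (p : (V × V) × (V × V)) (hp : p ∈ domM B v) :
    Bc B (mir B v vs n p).1 (mir B v vs n p).1 = 0 ∧
    0 < (Bc B (mir B v vs n p).1 (conjC (mir B v vs n p).1)).re ∧
    Bc B (mir B v vs n p).1 (toC (mir B v vs n p).2.2) = 0 ∧
    0 < B (mir B v vs n p).2.2 (mir B v vs n p).2.2 ∧
    B (mir B v vs n p).1.2 v = 0 ∧
    B (mir B v vs n p).1.1 v = (n : ℝ) / B p.1.1 v ∧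
    B (mir B v vs n p).1.1 v ≠ 0 ∧
    B (mir B v vs n p).2.2 v = 0 ∧
    B (mir B v vs n p).2.1 v = 0 ∧
    mir B v vs n p ∈ domM B v :=
  statement4_general B hsymm n hn v vs hv hvs hvvs p hp
end
end

section
/- The map h intertwines the mirror map m with the lattice mirror involution: for every p = (α, β + ix) ∈ Dom(m)^𝒢, writing h(p) = (δ₁, δ₂) and h(m(p)) = (γ₁, γ₂), there exist nonzero complex numbers c₁ and c₂ such that γ₁ = c₁·ξ(δ₂) and γ₂ = c₂·ξ(δ₁), where ξ is extended ℂ-linearly to V̂_ℂ. (That is, h ∘ m = m̄ ∘ h, where m̄ = ι ∘ ξ acts on pairs of complex lines by applying ξ and exchanging the two factors.) -/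
/- Context: `V` is a finite-dimensional real vector space with a nondegenerate symmetric
bilinear form `B` of signature `(3, dim V − 3)`.  We model the complexification `V_ℂ`
by pairs `(a, b) : V × V` representing `a + i·b`. -/

noncomputable section

/- Enlargement `V̂ = V ⊕ ℝw ⊕ ℝw*` of `V` by a hyperbolic plane `U(n)`:
we model `V̂` as `V × ℝ × ℝ` with `w = (0, 1, 0)` and `w* = (0, 0, 1)`. -/

/-- The bilinear form of `V̂`: it restricts to `B` on `V`, satisfies `w² = (w*)² = 0`,
`w·w* = n`, and `w, w*` are orthogonal to `V`. -/
def Bhat {V : Type*} [AddCommGroup V] [Module ℝ V] (B : LinearMap.BilinForm ℝ V) (n : ℝ) :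
    LinearMap.BilinForm ℝ (V × ℝ × ℝ) :=
  LinearMap.mk₂ ℝ (fun y z => B y.1 z.1 + n * (y.2.1 * z.2.2 + y.2.2 * z.2.1))
    (fun m₁ m₂ z => by
      simp only [Prod.fst_add, Prod.snd_add, map_add, LinearMap.add_apply]; ring)
    (fun c m z => by
      simp only [Prod.smul_fst, Prod.smul_snd, map_smul, LinearMap.smul_apply,
        smul_eq_mul]; ring)
    (fun m z₁ z₂ => by
      simp only [Prod.fst_add, Prod.snd_add, map_add, LinearMap.add_apply]; ring)
    (fun c m z => by
      simp only [Prod.smul_fst, Prod.smul_snd, map_smul, LinearMap.smul_apply,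
        smul_eq_mul]; ring)

/-- The basis vector `w` of the added hyperbolic plane. -/
def wHat (V : Type*) [AddCommGroup V] : V × ℝ × ℝ := (0, 1, 0)

/-- The basis vector `w*` of the added hyperbolic plane. -/
def wsHat (V : Type*) [AddCommGroup V] : V × ℝ × ℝ := (0, 0, 1)

/-- The ℂ-linear embedding of the complexification of `V` into that of `V̂`. -/
def jC {V : Type*} [AddCommGroup V] (y : V × V) : (V × ℝ × ℝ) × (V × ℝ × ℝ) :=
  ((y.1, 0, 0), (y.2, 0, 0))

/-- The map `h(α, β + ix) = (√n·α − (α·β)·w, √n·β + ½(x² − β²)·w + w* + i(√n·x − (x·β)·w))`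
from `𝒢` into the complexification of `V̂`. -/
def hmap {V : Type*} [AddCommGroup V] [Module ℝ V] (B : LinearMap.BilinForm ℝ V) (n : ℝ)
    (p : (V × V) × (V × V)) : ((V × ℝ × ℝ) × (V × ℝ × ℝ)) × ((V × ℝ × ℝ) × (V × ℝ × ℝ)) :=
  (Real.sqrt n • jC p.1 - cSMul (Bc B p.1 (toC p.2.1)) (toC (wHat V)),
   (Real.sqrt n • (p.2.1, (0 : ℝ), (0 : ℝ)) +
      ((B p.2.2 p.2.2 - B p.2.1 p.2.1) / 2) • wHat V + wsHat V,
    Real.sqrt n • (p.2.2, (0 : ℝ), (0 : ℝ)) - (B p.2.2 p.2.1) • wHat V))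

/-- The involution `ξ` of `V̂`: the linear isometry fixing the orthogonal complement of
`span(v, v*, w, w*)` pointwise and exchanging `v ↔ w`, `v* ↔ w*`.  Explicitly, writing
`u = z + a·v + b·v*` with `z ⊥ v, v*` (so `a = (u·v*)/n`, `b = (u·v)/n`),
`ξ(u + c·w + d·w*) = z + c·v + d·v* + a·w + b·w*`. -/
def xiR {V : Type*} [AddCommGroup V] [Module ℝ V] (B : LinearMap.BilinForm ℝ V)
    (v vs : V) (n : ℝ) (u : V × ℝ × ℝ) : V × ℝ × ℝ :=
  (prR B v vs n u.1 + u.2.1 • v + u.2.2 • vs, B u.1 vs / n, B u.1 v / n)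

/-- The ℂ-linear extension of `ξ` to the complexification of `V̂`. -/
def xiC {V : Type*} [AddCommGroup V] [Module ℝ V] (B : LinearMap.BilinForm ℝ V)
    (v vs : V) (n : ℝ) (y : (V × ℝ × ℝ) × (V × ℝ × ℝ)) : (V × ℝ × ℝ) × (V × ℝ × ℝ) :=
  (xiR B v vs n y.1, xiR B v vs n y.2)

/-! With `a = Re α · v`, both identities hold with `c₁ = c₂ = √n / a`. Comparing the formulas,
only the `w`-coefficients of `h(m(p))`, namely `-α∨·β∨` and `-½(β∨ + i x∨)²`, need work. Since `pr`
is the orthogonal projection onto `span(v, v*)^⊥`, the relations `α² = 0`, `α·x = 0` and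
`β·v = x·v = (Im α)·v = 0` give `α∨·β∨ = -((β + ix)·v*)/a` and `(β∨ + i x∨)² = -2(α·v*)/a`,
which are exactly the `w`-coefficients of `(√n / a)·ξ(h(p))`. -/

section MirrorMap

variable {V : Type*} [AddCommGroup V] [Module ℝ V] {B : LinearMap.BilinForm ℝ V}
  {v vs : V} {n : ℝ}

theorem hmap_snd_eq (hsymm : ∀ x y : V, B x y = B y x) (q : (V × V) × (V × V)) :
    (hmap B n q).2 =
      √n • jC q.2 - cSMul (Bc B q.2 q.2 / 2) (toC (wHat V)) + toC (wsHat V) := by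
  obtain ⟨-, β, x⟩ := q
  simp only [hmap, jC, Bc, cSMul, toC, wHat, wsHat, hsymm β x, Prod.ext_iff, Prod.smul_mk,
    Prod.mk_add_mk, Prod.mk_sub_mk, smul_eq_mul, Complex.div_ofNat_re, Complex.div_ofNat_im,
    add_self_div_two, mul_zero, mul_one, smul_zero, add_zero, zero_add, sub_zero, zero_sub,
    sub_self, and_true, true_and]
  ring

theorem Bc_mir_fst_toC_mir_snd_fst (hsymm : ∀ x y : V, B x y = B y x) (hn : 0 < n)
    (hv : B v v = 0) (hvs : B vs vs = 0) (hvvs : B v vs = n) {α₁ α₂ β x : V}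
    (ha : B α₁ v ≠ 0) (hβv : B β v = 0) (hxv : B x v = 0) (hαx : B α₁ x = 0) :
    Bc B (mir B v vs n ((α₁, α₂), (β, x))).1 (toC (mir B v vs n ((α₁, α₂), (β, x))).2.1) =
      -Bc B (β, x) (toC vs) / B α₁ v := by
  obtain ⟨s, hs, rfl⟩ : ∃ s, 0 < s ∧ s ^ 2 = n := ⟨√n, by positivity, Real.sq_sqrt hn.le⟩
  apply Complex.ext <;>
  simp only [mir, prC, Bc, toC, cSMul, Prod.fst_add, Prod.snd_add, Prod.fst_sub, Prod.snd_sub,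
      Prod.smul_fst, Prod.smul_snd, smul_eq_mul, map_add, map_sub, map_smul, LinearMap.add_apply,
      LinearMap.sub_apply, LinearMap.smul_apply, map_zero, smul_zero, mul_zero, sub_zero,
      add_zero, zero_add, Real.sqrt_sq hs.le, Complex.div_ofReal_re, Complex.div_ofReal_im,
      Complex.div_ofNat_re, Complex.div_ofNat_im, Complex.neg_re, Complex.neg_im, hsymm v α₁,
      hsymm vs α₁, hsymm vs v, hsymm β α₁, hsymm x α₁, hβv, hxv, hαx, hv, hvs, hvvs] <;>
  field_simp <;> ring

theorem Bc_mir_snd_self (hsymm : ∀ x y : V, B x y = B y x) (hn : 0 < n)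
    (hv : B v v = 0) (hvs : B vs vs = 0) (hvvs : B v vs = n) {α₁ α₂ β x : V}
    (ha : B α₁ v ≠ 0) (hα₂v : B α₂ v = 0) (hαα : Bc B (α₁, α₂) (α₁, α₂) = 0) :
    Bc B (mir B v vs n ((α₁, α₂), (β, x))).2 (mir B v vs n ((α₁, α₂), (β, x))).2 =
      -2 * Bc B (α₁, α₂) (toC vs) / B α₁ v := by
  obtain ⟨s, hs, rfl⟩ : ∃ s, 0 < s ∧ s ^ 2 = n := ⟨√n, by positivity, Real.sq_sqrt hn.le⟩
  have hre : B α₁ α₁ - B α₂ α₂ = 0 := congrArg Complex.re hαα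
  have him : B α₁ α₂ + B α₂ α₁ = 0 := congrArg Complex.im hαα
  apply Complex.ext <;>
  simp only [mir, prC, Bc, toC, cSMul, Prod.fst_sub, Prod.snd_sub, Prod.smul_fst,
      Prod.smul_snd, smul_eq_mul, map_sub, map_smul, LinearMap.sub_apply, LinearMap.smul_apply,
      map_zero, smul_zero, mul_zero, sub_zero, add_zero, zero_add, Real.sqrt_sq hs.le,
      Complex.div_ofReal_re, Complex.div_ofReal_im, Complex.div_ofNat_re, Complex.div_ofNat_im,
      Complex.neg_re, Complex.neg_im, Complex.mul_re, Complex.mul_im, Complex.re_ofNat,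
      Complex.im_ofNat, hsymm v α₁, hsymm vs α₁, hsymm v α₂, hsymm vs α₂, hsymm vs v, hα₂v, hv,
      hvs, hvvs] <;>
  field_simp
  · linear_combination s ^ 2 * hre
  · linear_combination s ^ 2 * him

theorem hmap_mir_fst (hsymm : ∀ x y : V, B x y = B y x) (hn : 0 < n)
    (hv : B v v = 0) (hvs : B vs vs = 0) (hvvs : B v vs = n) {α₁ α₂ β x : V}
    (ha : B α₁ v ≠ 0) (hβv : B β v = 0) (hxv : B x v = 0) (hαx : B α₁ x = 0) :
    (hmap B n (mir B v vs n ((α₁, α₂), (β, x)))).1 =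
      cSMul (√n / B α₁ v : ℝ) (xiC B v vs n (hmap B n ((α₁, α₂), (β, x))).2) := by
  rw [hmap, Bc_mir_fst_toC_mir_snd_fst hsymm hn hv hvs hvvs ha hβv hxv hαx]
  obtain ⟨s, hs, rfl⟩ : ∃ s, 0 < s ∧ s ^ 2 = n := ⟨√n, by positivity, Real.sq_sqrt hn.le⟩
  simp only [hmap, mir, xiC, xiR, jC, prC, prR, Bc, toC, cSMul, wHat, wsHat, Prod.ext_iff,
      Prod.fst_add, Prod.snd_add, Prod.fst_sub, Prod.snd_sub, Prod.smul_fst, Prod.smul_snd,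
      smul_eq_mul, map_smul, LinearMap.smul_apply, map_zero, smul_zero, mul_zero, sub_zero,
      add_zero, zero_add, Real.sqrt_sq hs.le, Complex.ofReal_re, Complex.ofReal_im,
      Complex.div_ofReal_re, Complex.div_ofReal_im, Complex.div_ofNat_re, Complex.div_ofNat_im,
      Complex.neg_re, Complex.neg_im, hsymm β x, hβv, hxv]
  and_intros <;> first
    | (field_simp; ring1)
    | (match_scalars <;> field_simp <;> ring)

theorem hmap_mir_snd (hsymm : ∀ x y : V, B x y = B y x) (hn : 0 < n)
    (hv : B v v = 0) (hvs : B vs vs = 0) (hvvs : B v vs = n) {α₁ α₂ β x : V}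
    (ha : B α₁ v ≠ 0) (hα₂v : B α₂ v = 0) (hαα : Bc B (α₁, α₂) (α₁, α₂) = 0) :
    (hmap B n (mir B v vs n ((α₁, α₂), (β, x)))).2 =
      cSMul (√n / B α₁ v : ℝ) (xiC B v vs n (hmap B n ((α₁, α₂), (β, x))).1) := by
  rw [hmap_snd_eq hsymm, Bc_mir_snd_self hsymm hn hv hvs hvvs ha hα₂v hαα]
  obtain ⟨s, hs, rfl⟩ : ∃ s, 0 < s ∧ s ^ 2 = n := ⟨√n, by positivity, Real.sq_sqrt hn.le⟩
  simp only [hmap, mir, xiC, xiR, jC, prC, prR, Bc, toC, cSMul, wHat, wsHat, Prod.ext_iff,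
      Prod.fst_add, Prod.snd_add, Prod.fst_sub, Prod.snd_sub, Prod.smul_fst, Prod.smul_snd,
      smul_eq_mul, map_smul, LinearMap.smul_apply, map_zero, smul_zero, mul_zero, sub_zero,
      add_zero, zero_add, Real.sqrt_sq hs.le, Complex.ofReal_re, Complex.ofReal_im,
      Complex.div_ofReal_re, Complex.div_ofReal_im, Complex.div_ofNat_re, Complex.div_ofNat_im,
      Complex.neg_re, Complex.neg_im, Complex.mul_re, Complex.mul_im, Complex.re_ofNat,
      Complex.im_ofNat, hα₂v]
  and_intros <;> first
    | (field_simp; ring1)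
    | (match_scalars <;> field_simp <;> ring)

end MirrorMap

theorem statement8_general {V : Type*} [NormedAddCommGroup V] [NormedSpace ℝ V]
    (B : LinearMap.BilinForm ℝ V)
    (hsymm : ∀ x y : V, B x y = B y x)
    (n : ℕ) (hn : 0 < n) (v vs : V)
    (hv : B v v = 0) (hvs : B vs vs = 0) (hvvs : B v vs = (n : ℝ))
    (p : (V × V) × (V × V)) (hp : p ∈ domM B v) :
    ∃ c₁ c₂ : ℂ, c₁ ≠ 0 ∧ c₂ ≠ 0 ∧
      (hmap B n (mir B v vs n p)).1 = cSMul c₁ (xiC B v vs n (hmap B n p).2) ∧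
      (hmap B n (mir B v vs n p)).2 = cSMul c₂ (xiC B v vs n (hmap B n p).1) := by
  obtain ⟨⟨α₁, α₂⟩, β, x⟩ := p
  obtain ⟨⟨hαα, -, hαx, -⟩, hα₂v, ha, hxv, hβv⟩ := hp
  have hα₁x : B α₁ x = 0 := by simpa [Bc, toC] using congrArg Complex.re hαx
  have hn' : (0 : ℝ) < n := Nat.cast_pos.mpr hn
  have hc : ((√n / B α₁ v : ℝ) : ℂ) ≠ 0 := by
    exact_mod_cast div_ne_zero (Real.sqrt_pos.mpr hn').ne' ha
  exact ⟨_, _, hc, hc, hmap_mir_fst hsymm hn' hv hvs hvvs ha hβv hxv hα₁x,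
    hmap_mir_snd hsymm hn' hv hvs hvvs ha hα₂v hαα⟩

/-- `h` intertwines the mirror map `m` with the lattice mirror involution
`m̄ = ι ∘ ξ`: for `p ∈ Dom(m)^𝒢`, writing `h(p) = (δ₁, δ₂)` and `h(m(p)) = (γ₁, γ₂)`, there
are nonzero `c₁, c₂ ∈ ℂ` with `γ₁ = c₁·ξ(δ₂)` and `γ₂ = c₂·ξ(δ₁)` (equality of complex
lines, i.e. `h ∘ m = m̄ ∘ h` on the level of the period domain `Gr^{po}_{2,2}`). -/
theorem statement8 {V : Type*} [NormedAddCommGroup V] [NormedSpace ℝ V] [FiniteDimensional ℝ V]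
    (B : LinearMap.BilinForm ℝ V)
    (hsymm : ∀ x y : V, B x y = B y x)
    (hnd : ∀ x : V, (∀ y : V, B x y = 0) → x = 0)
    (hsig : IsSigThree B)
    (n : ℕ) (hn : 0 < n) (v vs : V)
    (hv : B v v = 0) (hvs : B vs vs = 0) (hvvs : B v vs = (n : ℝ))
    (p : (V × V) × (V × V)) (hp : p ∈ domM B v) :
    ∃ c₁ c₂ : ℂ, c₁ ≠ 0 ∧ c₂ ≠ 0 ∧
      (hmap B n (mir B v vs n p)).1 = cSMul c₁ (xiC B v vs n (hmap B n p).2) ∧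
      (hmap B n (mir B v vs n p)).2 = cSMul c₂ (xiC B v vs n (hmap B n p).1) :=
  statement8_general B hsymm n hn v vs hv hvs hvvs p hp
end
end

section
/- The mirror involution changes the connected component: for every p = (α, β + ix) ∈ Dom(m)^𝒢, the points p and m(p) lie in distinct connected components of 𝒢. -/
/- Context: `V` is a finite-dimensional real vector space with a nondegenerate symmetric
bilinear form `B` of signature `(3, dim V − 3)`.  We model the complexification `V_ℂ`
by pairs `(a, b) : V × V` representing `a + i·b`. -/

noncomputable section

/-!
For `q = (α, β + ix) ∈ 𝒢` the vectors `Re α, Im α, x` are pairwise orthogonal and positive, so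
they span a positive definite 3-plane, which is maximal since the signature is `(3, ·)`. Fix this
frame `f` for the point `p`. The function `q ↦ det (f_i · g_j)`, with `g` the frame of `q`, is
continuous on `𝒢` and never vanishes: a kernel vector would give a positive vector of the plane
of `q` orthogonal to the plane of `p`, hence in the negative semidefinite complement of a maximal
positive plane. It is positive at `p`. At `m(p)` it is negative, by an explicit computation of
the frame of `m(p)` combined with Bessel's inequality for the maximal positive plane of `p`.
Hence `p` and `m(p)` lie in different components of `𝒢`.
-/

section Algebra

variable {V : Type*} [AddCommGroup V] [Module ℝ V] {ι : Type*}

def IsPosOrthoFamily (B : LinearMap.BilinForm ℝ V) (f : ι → V) : Prop :=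
  B.IsOrthoᵢ f ∧ ∀ i, 0 < B (f i) (f i)

lemma LinearMap.IsOrthoᵢ.apply_sum_smul [Fintype ι] {B : LinearMap.BilinForm ℝ V} {f : ι → V}
    (hf : B.IsOrthoᵢ f) (c : ι → ℝ) (j : ι) :
    B (f j) (∑ i, c i • f i) = c j * B (f j) (f j) := by
  classical
  rw [map_sum, Finset.sum_eq_single j]
  · simp [smul_eq_mul]
  · intro i _ hij
    simp [hf hij.symm]
  · simp

lemma LinearMap.IsOrthoᵢ.sum_smul_apply_self [Fintype ι] {B : LinearMap.BilinForm ℝ V} {f : ι → V}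
    (hf : B.IsOrthoᵢ f) (c : ι → ℝ) :
    B (∑ i, c i • f i) (∑ i, c i • f i) = ∑ i, c i ^ 2 * B (f i) (f i) := by
  rw [LinearMap.map_sum₂]
  refine Finset.sum_congr rfl fun i _ => ?_
  rw [LinearMap.map_smul₂, hf.apply_sum_smul, smul_eq_mul]
  ring

lemma IsPosOrthoFamily.smul {B : LinearMap.BilinForm ℝ V} {f : ι → V}
    (hf : IsPosOrthoFamily B f) {t : ℝ} (ht : t ≠ 0) : IsPosOrthoFamily B (t • f) :=
  ⟨fun i j hij => by simp [Function.onFun, hf.1 hij], fun i => by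
    simpa [← mul_assoc] using mul_pos (mul_self_pos.2 ht) (hf.2 i)⟩

def crossGram (B : LinearMap.BilinForm ℝ V) (f g : ι → V) : Matrix ι ι ℝ :=
  Matrix.of fun i j => B (f i) (g j)

lemma crossGram_smul_right (B : LinearMap.BilinForm ℝ V) (f g : ι → V) (t : ℝ) :
    crossGram B f (t • g) = t • crossGram B f g := by
  ext i j
  simp [crossGram]

lemma det_crossGram_self_pos [Fintype ι] [DecidableEq ι] {B : LinearMap.BilinForm ℝ V}
    {f : ι → V} (hf : IsPosOrthoFamily B f) : 0 < (crossGram B f f).det := by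
  have hdiag : crossGram B f f = Matrix.diagonal fun i => B (f i) (f i) := by
    ext i j
    rcases eq_or_ne i j with rfl | hij
    · simp [crossGram]
    · simp [crossGram, hf.1 hij, hij]
  rw [hdiag, Matrix.det_diagonal]
  exact Finset.prod_pos fun i _ => hf.2 i

section Signature

variable [FiniteDimensional ℝ V] {B : LinearMap.BilinForm ℝ V} [Fintype ι]

lemma IsSigThree.card_le (hB : IsSigThree B) {f : ι → V} (hf : IsPosOrthoFamily B f) :
    Fintype.card ι ≤ 3 := by
  obtain ⟨P, N, hPN, hP, -, -, hN⟩ := hB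
  suffices LinearIndependent ℝ (P.projectionOnto N hPN ∘ f) from
    hP ▸ this.fintype_card_le_finrank
  rw [Fintype.linearIndependent_iff]
  intro c hc
  set z := ∑ i, c i • f i with hzdef
  have hzN : z ∈ N := by
    rw [← Submodule.ker_projectionOnto hPN, LinearMap.mem_ker]
    simpa [z, map_sum] using hc
  have hz : z = 0 := by
    by_contra hz
    refine (hN z hzN hz).not_ge ?_
    rw [hf.1.sum_smul_apply_self]
    exact Finset.sum_nonneg fun i _ => mul_nonneg (sq_nonneg _) (hf.2 i).le
  intro j
  have := hf.1.apply_sum_smul c j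
  rw [← hzdef, hz, map_zero] at this
  exact (mul_eq_zero.1 this.symm).resolve_right (hf.2 j).ne'

lemma IsSigThree.apply_self_nonpos (hB : IsSigThree B) (hsymm : ∀ x y, B x y = B y x)
    {f : ι → V} (hf : IsPosOrthoFamily B f) (hcard : Fintype.card ι = 3) {u : V}
    (hu : ∀ i, B (f i) u = 0) : B u u ≤ 0 := by
  by_contra! hpos
  have hext : IsPosOrthoFamily B (fun o : Option ι => o.elim u f) := by
    refine ⟨?_, fun o => ?_⟩
    · rintro (_ | i) (_ | j) hij
      · exact absurd rfl hij
      · exact (hsymm _ _).trans (hu j)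
      · exact hu i
      · exact hf.1 fun h => hij (congrArg some h)
    · cases o
      exacts [hpos, hf.2 _]
  have := hB.card_le hext
  simp [hcard] at this

lemma IsSigThree.apply_self_le_sum (hB : IsSigThree B) (hsymm : ∀ x y, B x y = B y x)
    {f : ι → V} (hf : IsPosOrthoFamily B f) (hcard : Fintype.card ι = 3) (u : V) :
    B u u ≤ ∑ i, B (f i) u ^ 2 / B (f i) (f i) := by
  set c : ι → ℝ := fun i => B (f i) u / B (f i) (f i)
  set w := u - ∑ i, c i • f i with hw
  have hfw : ∀ j, B (f j) w = 0 := fun j => by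
    rw [hw, map_sub, hf.1.apply_sum_smul, div_mul_cancel₀ _ (hf.2 j).ne', sub_self]
  have hww : B w w = B u u - ∑ i, B (f i) u ^ 2 / B (f i) (f i) := by
    have hsplit := LinearMap.map_sub₂ B u (∑ i, c i • f i) w
    rw [← hw, LinearMap.map_sum₂] at hsplit
    simp only [LinearMap.map_smul₂, hfw, smul_zero, Finset.sum_const_zero, sub_zero] at hsplit
    rw [hsplit, hw, map_sub, map_sum]
    congr 1
    refine Finset.sum_congr rfl fun i _ => ?_
    rw [map_smul, smul_eq_mul, hsymm u]
    ring
  linarith [hB.apply_self_nonpos hsymm hf hcard hfw]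

lemma IsSigThree.det_crossGram_ne_zero [DecidableEq ι] (hB : IsSigThree B)
    (hsymm : ∀ x y, B x y = B y x) {f g : ι → V} (hf : IsPosOrthoFamily B f)
    (hg : IsPosOrthoFamily B g) (hcard : Fintype.card ι = 3) : (crossGram B f g).det ≠ 0 := by
  intro hdet
  obtain ⟨c, hc0, hc⟩ := Matrix.exists_mulVec_eq_zero_iff.2 hdet
  set u := ∑ j, c j • g j
  have hfu : ∀ i, B (f i) u = 0 := fun i => by
    simpa [u, crossGram, Matrix.mulVec, dotProduct, map_sum, mul_comm] using congrFun hc i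
  have hu := hB.apply_self_nonpos hsymm hf hcard hfu
  rw [hg.1.sum_smul_apply_self] at hu
  have hterms := (Finset.sum_eq_zero_iff_of_nonneg fun j _ =>
    mul_nonneg (sq_nonneg (c j)) (hg.2 j).le).1
    (le_antisymm hu (Finset.sum_nonneg fun j _ => mul_nonneg (sq_nonneg _) (hg.2 j).le))
  exact hc0 (funext fun j => by
    simpa [(hg.2 j).ne'] using hterms j (Finset.mem_univ j))

end Signature

lemma isPosOrthoFamily_fin_three_iff {B : LinearMap.BilinForm ℝ V} (hsymm : ∀ x y, B x y = B y x)
    {u₀ u₁ u₂ : V} :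
    IsPosOrthoFamily B ![u₀, u₁, u₂] ↔
      (B u₀ u₁ = 0 ∧ B u₀ u₂ = 0 ∧ B u₁ u₂ = 0) ∧ 0 < B u₀ u₀ ∧ 0 < B u₁ u₁ ∧ 0 < B u₂ u₂ := by
  constructor
  · rintro ⟨hortho, hpos⟩
    exact ⟨⟨hortho (i := 0) (j := 1) (by decide), hortho (i := 0) (j := 2) (by decide),
      hortho (i := 1) (j := 2) (by decide)⟩, hpos 0, hpos 1, hpos 2⟩
  · rintro ⟨⟨h01, h02, h12⟩, h0, h1, h2⟩
    refine ⟨fun i j hij => ?_, fun i => by fin_cases i <;> assumption⟩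
    fin_cases i <;> fin_cases j <;> simp_all [Function.onFun, hsymm u₁ u₀, hsymm u₂ u₀, hsymm u₂ u₁]

def periodFrame (q : (V × V) × (V × V)) : Fin 3 → V := ![q.1.1, q.1.2, q.2.2]

lemma mem_periodDomain_iff_s9 {B : LinearMap.BilinForm ℝ V} (hsymm : ∀ x y, B x y = B y x)
    (q : (V × V) × (V × V)) :
    q ∈ periodDomain B ↔ IsPosOrthoFamily B (periodFrame q) ∧ B q.1.1 q.1.1 = B q.1.2 q.1.2 := by
  rw [periodFrame, isPosOrthoFamily_fin_three_iff hsymm]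
  simp only [periodDomain, Bc, conjC, toC, Set.mem_ofPred_eq, Complex.ext_iff, Complex.zero_re,
    Complex.zero_im, map_zero, map_neg, sub_zero, zero_add, sub_neg_eq_add, hsymm q.1.2 q.1.1]
  constructor
  · rintro ⟨⟨h1, h2⟩, h3, ⟨h4, h5⟩, h6⟩
    refine ⟨⟨⟨by linarith, h4, h5⟩, by linarith, by linarith, h6⟩, by linarith⟩
  · rintro ⟨⟨⟨h1, h4, h5⟩, h2, h3, h6⟩, h7⟩
    exact ⟨⟨by linarith, by linarith⟩, by linarith, ⟨h4, h5⟩, h6⟩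

section Mirror

variable (B : LinearMap.BilinForm ℝ V) (v vs : V) (n : ℝ)

-- For `α = a + ib` and `c = a · v`, the mirror point `m(α, β + ix)` is `c⁻¹` times
-- `((mirNumRe β x, mirNum x β), (mirNum a β, mirNum b β))`.
def mirNumRe (β x : V) : V := √n • prR B v vs n β - ((B β β - B x x) / 2) • v + vs

def mirNum (z β : V) : V := √n • prR B v vs n z - B z β • v

lemma prC_eq (y : V × V) : prC B v vs n y = (prR B v vs n y.1, prR B v vs n y.2) := by
  ext <;> simp [prC, prR, cSMul, Bc, toC, Complex.div_ofReal_re, Complex.div_ofReal_im]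

lemma periodFrame_mir (hsymm : ∀ x y, B x y = B y x) (a b β x : V) :
    periodFrame (mir B v vs n ((a, b), (β, x))) =
      (B a v)⁻¹ • ![mirNumRe B v vs n β x, mirNum B v vs n x β, mirNum B v vs n b β] := by
  ext i
  fin_cases i <;> simp [periodFrame, mir, prC_eq, mirNumRe, mirNum, cSMul, Bc, toC, hsymm x β]

end Mirror

section MirrorPoint

variable {B : LinearMap.BilinForm ℝ V} {v vs : V} {n : ℝ}

lemma apply_mirNum {z w : V} (hz : B z v = 0) (hw : B w v = 0) (β : V) :
    B w (mirNum B v vs n z β) = √n * B w z := by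
  simp [mirNum, prR, hz, hw]

lemma mirNum_apply_mirNum (hsymm : ∀ x y, B x y = B y x) (hv : B v v = 0) (hn : 0 ≤ n)
    {z w : V} (hz : B z v = 0) (hw : B w v = 0) (β β' : V) :
    B (mirNum B v vs n z β) (mirNum B v vs n w β') = n * B z w := by
  have hvw : B v w = 0 := (hsymm v w).trans hw
  simp [mirNum, prR, hz, hw, hvw, hv, ← mul_assoc, Real.mul_self_sqrt hn]

lemma apply_mirNumRe {w β : V} (hw : B w v = 0) (hβ : B β v = 0) (x : V) :
    B w (mirNumRe B v vs n β x) = √n * B w β + B w vs := by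
  simp [mirNumRe, prR, hw, hβ]

lemma mirNumRe_apply_self (hsymm : ∀ x y, B x y = B y x) (hv : B v v = 0) (hvs : B vs vs = 0)
    (hvvs : B v vs = n) (hn : 0 < n) {β : V} (hβ : B β v = 0) (x : V) :
    B (mirNumRe B v vs n β x) (mirNumRe B v vs n β x) = n * B x x := by
  have hvβ : B v β = 0 := (hsymm v β).trans hβ
  have hvsv : B vs v = n := (hsymm vs v).trans hvvs
  have hvsβ : B vs β = B β vs := hsymm vs β
  simp [mirNumRe, prR, hβ, hvβ, hv, hvs, hvvs, hvsv, hvsβ]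
  field_simp
  linear_combination (2 * B β β) * Real.mul_self_sqrt hn.le

lemma mirNumRe_apply_mirNum (hsymm : ∀ x y, B x y = B y x) (hv : B v v = 0)
    (hvvs : B v vs = n) (hn : 0 < n) {β z : V} (hβ : B β v = 0) (hz : B z v = 0) (x : V) :
    B (mirNumRe B v vs n β x) (mirNum B v vs n z β) = 0 := by
  have hvz : B v z = 0 := (hsymm v z).trans hz
  have hvsv : B vs v = n := (hsymm vs v).trans hvvs
  simp [mirNumRe, mirNum, prR, hβ, hz, hvz, hv, hvsv, hsymm vs z, hsymm β z]
  field_simp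
  linear_combination (B z β) * Real.mul_self_sqrt hn.le

lemma mirNumRe_apply_v (hsymm : ∀ x y, B x y = B y x) (hv : B v v = 0) (hvvs : B v vs = n)
    {β : V} (hβ : B β v = 0) (x : V) : B (mirNumRe B v vs n β x) v = n := by
  simp [mirNumRe, prR, hβ, hv, (hsymm vs v).trans hvvs]

lemma sqrt_mul_apply_mirNum (hn : 0 < n) {a β z : V} (hβ : B β v = 0) (hz : B z v = 0)
    (haz : B a z = 0) (x : V) :
    √n * B a (mirNum B v vs n z β) = -(B a v * B z (mirNumRe B v vs n β x)) := by
  rw [apply_mirNumRe hz hβ]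
  simp [mirNum, prR, hz, haz]
  field_simp
  linear_combination (-(B a v * B z vs)) * Real.mul_self_sqrt hn.le

lemma isPosOrthoFamily_mirNum (hsymm : ∀ x y, B x y = B y x) (hv : B v v = 0)
    (hvs : B vs vs = 0) (hvvs : B v vs = n) (hn : 0 < n) {a b β x : V}
    (hp : ((a, b), (β, x)) ∈ domM B v) :
    IsPosOrthoFamily B ![mirNumRe B v vs n β x, mirNum B v vs n x β, mirNum B v vs n b β] := by
  obtain ⟨hpG, hbv, -, hxv, hβv⟩ := hp
  have hf := ((mem_periodDomain_iff_s9 hsymm _).1 hpG).1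
  rw [periodFrame, isPosOrthoFamily_fin_three_iff hsymm] at hf
  obtain ⟨⟨-, -, hbx⟩, -, hb, hx⟩ := hf
  rw [isPosOrthoFamily_fin_three_iff hsymm, mirNumRe_apply_self hsymm hv hvs hvvs hn hβv,
    mirNum_apply_mirNum hsymm hv hn.le hxv hbv, mirNum_apply_mirNum hsymm hv hn.le hxv hxv,
    mirNum_apply_mirNum hsymm hv hn.le hbv hbv, mirNumRe_apply_mirNum hsymm hv hvvs hn hβv hxv,
    mirNumRe_apply_mirNum hsymm hv hvvs hn hβv hbv, hsymm x b, hbx]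
  exact ⟨⟨rfl, rfl, mul_zero n⟩, mul_pos hn hx, mul_pos hn hx, mul_pos hn hb⟩

lemma mir_mem_periodDomain (hsymm : ∀ x y, B x y = B y x) (hv : B v v = 0)
    (hvs : B vs vs = 0) (hvvs : B v vs = n) (hn : 0 < n) {p : (V × V) × (V × V)}
    (hp : p ∈ domM B v) : mir B v vs n p ∈ periodDomain B := by
  obtain ⟨⟨a, b⟩, β, x⟩ := p
  have hframe := periodFrame_mir B v vs n hsymm a b β x
  rw [mem_periodDomain_iff_s9 hsymm, hframe]
  refine ⟨(isPosOrthoFamily_mirNum hsymm hv hvs hvvs hn hp).smul (inv_ne_zero hp.2.2.1), ?_⟩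
  have h0 := congrFun hframe 0
  have h1 := congrFun hframe 1
  simp only [periodFrame, Pi.smul_apply, Matrix.cons_val_zero, Matrix.cons_val_one] at h0 h1
  simp only [h0, h1, map_smul, LinearMap.smul_apply]
  rw [mirNumRe_apply_self hsymm hv hvs hvvs hn hp.2.2.2.2, mirNum_apply_mirNum hsymm hv hn.le
      hp.2.2.2.1 hp.2.2.2.1]

lemma det_crossGram_mirNum (hsymm : ∀ x y, B x y = B y x) (hn : 0 < n) {a b β x : V}
    (hp : ((a, b), (β, x)) ∈ domM B v) :
    (crossGram B ![a, b, x]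
        ![mirNumRe B v vs n β x, mirNum B v vs n x β, mirNum B v vs n b β]).det =
      -(n * B b b * B x x * B a (mirNumRe B v vs n β x)) -
        B a v * (B b b * B x (mirNumRe B v vs n β x) ^ 2 +
          B x x * B b (mirNumRe B v vs n β x) ^ 2) := by
  obtain ⟨hpG, hbv, -, hxv, hβv⟩ := hp
  have hf := ((mem_periodDomain_iff_s9 hsymm _).1 hpG).1
  rw [periodFrame, isPosOrthoFamily_fin_three_iff hsymm] at hf
  obtain ⟨⟨hab, hax, hbx⟩, -⟩ := hf
  have hxb : B x b = 0 := (hsymm x b).trans hbx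
  rw [Matrix.det_fin_three]
  simp only [crossGram, Matrix.of_apply, Matrix.cons_val_zero, Matrix.cons_val_one,
    Matrix.cons_val_two, Matrix.head_cons, Matrix.tail_cons]
  rw [apply_mirNum hxv hbv, apply_mirNum hbv hbv, apply_mirNum hxv hxv, apply_mirNum hbv hxv,
    hbx, hxb]
  linear_combination
    (B b b * B x (mirNumRe B v vs n β x)) * sqrt_mul_apply_mirNum (β := β) hn hβv hxv hax x +
    (B x x * B b (mirNumRe B v vs n β x)) * sqrt_mul_apply_mirNum (β := β) hn hβv hbv hab x -
    (B b b * B x x * B a (mirNumRe B v vs n β x)) * Real.mul_self_sqrt hn.le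

lemma IsSigThree.mul_det_crossGram_mirNum_neg [FiniteDimensional ℝ V] (hB : IsSigThree B)
    (hsymm : ∀ x y, B x y = B y x) (hv : B v v = 0) (hvs : B vs vs = 0) (hvvs : B v vs = n)
    (hn : 0 < n) {a b β x : V} (hp : ((a, b), (β, x)) ∈ domM B v) :
    B a v * (crossGram B ![a, b, x]
        ![mirNumRe B v vs n β x, mirNum B v vs n x β, mirNum B v vs n b β]).det < 0 := by
  rw [det_crossGram_mirNum hsymm hn hp]
  obtain ⟨hpG, hbv, hc, hxv, hβv⟩ := hp
  obtain ⟨hf, hab⟩ := (mem_periodDomain_iff_s9 hsymm _).1 hpG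
  obtain ⟨-, -, hb, hx⟩ := (isPosOrthoFamily_fin_three_iff hsymm).1 hf
  simp only at hab hb hx
  set A := mirNumRe B v vs n β x
  set c := B a v
  -- Bessel's inequality for `A` shifted along the null vector `v` to become orthogonal to `a`
  set u := A - (B a A / c) • v
  have hua : B a u = 0 := by simp [u, c, hc]
  have hub : B b u = B b A := by simp [u, hbv]
  have hux : B x u = B x A := by simp [u, hxv]
  have huu : B u u = n * B x x - 2 * n * B a A / c := by
    simp [u, mirNumRe_apply_self hsymm hv hvs hvvs hn hβv, mirNumRe_apply_v hsymm hv hvvs hβv,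
      hsymm v A, hv, A]
    ring
  have hbessel := hB.apply_self_le_sum hsymm hf (Fintype.card_fin 3) u
  simp only [Fin.sum_univ_three, periodFrame, Matrix.cons_val_zero, Matrix.cons_val_one,
    Matrix.cons_val_two, Matrix.head_cons, Matrix.tail_cons] at hbessel
  rw [hua, hub, hux, huu, hab] at hbessel
  have hK : 0 < c ^ 2 * B b b * B x x := by positivity
  have key := mul_le_mul_of_nonneg_left hbessel hK.le
  have hlhs : c ^ 2 * B b b * B x x * (n * B x x - 2 * n * B a A / c) =
      n * c ^ 2 * B b b * B x x ^ 2 - 2 * n * B b b * B x x * c * B a A := by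
    field_simp
  have hrhs : c ^ 2 * B b b * B x x *
      (0 ^ 2 / B b b + B b A ^ 2 / B b b + B x A ^ 2 / B x x) =
      c ^ 2 * (B x x * B b A ^ 2 + B b b * B x A ^ 2) := by
    field_simp
    ring
  rw [hlhs, hrhs] at key
  have hP : 0 < n * c ^ 2 * B b b * B x x ^ 2 := by positivity
  have hR : 0 ≤ c ^ 2 * (B x x * B b A ^ 2 + B b b * B x A ^ 2) := by positivity
  linarith

lemma IsSigThree.det_crossGram_periodFrame_mir_neg [FiniteDimensional ℝ V] (hB : IsSigThree B)
    (hsymm : ∀ x y, B x y = B y x) (hv : B v v = 0) (hvs : B vs vs = 0) (hvvs : B v vs = n)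
    (hn : 0 < n) {p : (V × V) × (V × V)} (hp : p ∈ domM B v) :
    (crossGram B (periodFrame p) (periodFrame (mir B v vs n p))).det < 0 := by
  obtain ⟨⟨a, b⟩, β, x⟩ := p
  have hneg := hB.mul_det_crossGram_mirNum_neg hsymm hv hvs hvvs hn hp
  rw [periodFrame_mir B v vs n hsymm, crossGram_smul_right, Matrix.det_smul, Fintype.card_fin]
  simp only [periodFrame]
  have hc : B a v ≠ 0 := hp.2.2.1
  calc (B a v)⁻¹ ^ 3 * _ = (B a v)⁻¹ ^ 4 * (B a v * _) := by field_simp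
    _ < 0 := mul_neg_of_pos_of_neg (by positivity) hneg

end MirrorPoint

end Algebra

lemma continuous_det_crossGram_periodFrame {V : Type*} [NormedAddCommGroup V] [NormedSpace ℝ V]
    [FiniteDimensional ℝ V] (B : LinearMap.BilinForm ℝ V) (f : Fin 3 → V) :
    Continuous fun q : (V × V) × (V × V) => (crossGram B f (periodFrame q)).det := by
  refine Continuous.matrix_det (continuous_matrix fun i j => ?_)
  refine (B (f i)).continuous_of_finiteDimensional.comp ?_
  fin_cases j <;> simp only [periodFrame] <;> fun_prop

lemma connectedComponentIn_ne_of_pos_of_neg {X : Type*} [TopologicalSpace X] {S : Set X}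
    {F : X → ℝ} (hF : ContinuousOn F S) (hS : ∀ q ∈ S, F q ≠ 0) {p q : X} (hp : p ∈ S)
    (hq : q ∈ S) (hFp : 0 < F p) (hFq : F q < 0) :
    connectedComponentIn S p ≠ connectedComponentIn S q := by
  intro heq
  have hqp : q ∈ connectedComponentIn S p := heq ▸ mem_connectedComponentIn hq
  obtain ⟨r, hr, hr0⟩ := isPreconnected_connectedComponentIn.intermediate_value₂ hqp
    (mem_connectedComponentIn hp) (hF.mono (connectedComponentIn_subset S p)) continuousOn_const
    hFq.le hFp.le
  exact hS r (connectedComponentIn_subset S p hr) hr0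

theorem statement9_general {V : Type*} [NormedAddCommGroup V] [NormedSpace ℝ V] [FiniteDimensional ℝ V]
    (B : LinearMap.BilinForm ℝ V)
    (hsymm : ∀ x y : V, B x y = B y x)
    (hsig : IsSigThree B)
    (n : ℕ) (hn : 0 < n) (v vs : V)
    (hv : B v v = 0) (hvs : B vs vs = 0) (hvvs : B v vs = (n : ℝ))
    (p : (V × V) × (V × V)) (hp : p ∈ domM B v) :
    mir B v vs n p ∈ periodDomain B ∧
    connectedComponentIn (periodDomain B) p ≠
      connectedComponentIn (periodDomain B) (mir B v vs n p) := by
  have hn' : (0 : ℝ) < n := Nat.cast_pos.2 hn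
  have hm := mir_mem_periodDomain hsymm hv hvs hvvs hn' hp
  have hframe : ∀ q ∈ periodDomain B, IsPosOrthoFamily B (periodFrame q) :=
    fun q hq => ((mem_periodDomain_iff_s9 hsymm q).1 hq).1
  have hdet_ne : ∀ q ∈ periodDomain B, (crossGram B (periodFrame p) (periodFrame q)).det ≠ 0 :=
    fun q hq => hsig.det_crossGram_ne_zero hsymm (hframe p hp.1) (hframe q hq) (Fintype.card_fin 3)
  exact ⟨hm, connectedComponentIn_ne_of_pos_of_neg
    (continuous_det_crossGram_periodFrame B (periodFrame p)).continuousOn hdet_ne hp.1 hm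
    (det_crossGram_self_pos (hframe p hp.1))
    (hsig.det_crossGram_periodFrame_mir_neg hsymm hv hvs hvvs hn' hp)⟩

/-- The mirror involution changes the connected component: for every
`p ∈ Dom(m)^𝒢`, the points `p` and `m(p)` lie in distinct connected components of `𝒢`. -/
theorem statement9 {V : Type*} [NormedAddCommGroup V] [NormedSpace ℝ V] [FiniteDimensional ℝ V]
    (B : LinearMap.BilinForm ℝ V)
    (hsymm : ∀ x y : V, B x y = B y x)
    (hnd : ∀ x : V, (∀ y : V, B x y = 0) → x = 0)
    (hsig : IsSigThree B)
    (n : ℕ) (hn : 0 < n) (v vs : V)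
    (hv : B v v = 0) (hvs : B vs vs = 0) (hvvs : B v vs = (n : ℝ))
    (p : (V × V) × (V × V)) (hp : p ∈ domM B v) :
    mir B v vs n p ∈ periodDomain B ∧
    connectedComponentIn (periodDomain B) p ≠
      connectedComponentIn (periodDomain B) (mir B v vs n p) :=
  statement9_general B hsymm hsig n hn v vs hv hvs hvvs p hp
end
end
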